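/- arXiv:1505.06485 — 2 statements merged into one kernel-verified Lean document; each statement's English description precedes it below -/
import Mathlib

section
/- For a connected weighted graph G=(V,E,w,b) with must-link constraint matrix Q^m and cannot-link matrix Q^c, let λ = NCut(C, C̄) for some consistent partition (C, C̄) (one satisfying all constraints). If γ ≥ gvol(V)·λ/(4(l+1)), then any minimizer of F̂_γ(C) := (cut(C,C̄) + γ(M̂(C)+N̂(C)))/bal(C) violates no more than l constraints. -/
open Finset

/-- cut(C, C̄) = 2 ∑_{i∈C, j∈C̄} w_{ij} -/
noncomputable def cutW {n : ℕ} (w : Fin n → Fin n → ℝ) (C : Finset (Fin n)) : ℝ :=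
  2 * ∑ i ∈ C, ∑ j ∈ Cᶜ, w i j

/-- generalized volume gvol(C) = ∑_{i∈C} b_i -/
noncomputable def gvol {n : ℕ} (b : Fin n → ℝ) (C : Finset (Fin n)) : ℝ := ∑ i ∈ C, b i

/-- bal(C) = 2 gvol(C) gvol(C̄) / gvol(V) -/
noncomputable def bal {n : ℕ} (b : Fin n → ℝ) (C : Finset (Fin n)) : ℝ :=
  2 * gvol b C * gvol b Cᶜ / gvol b Finset.univ

/-- NCut(C,C̄) = cut(C,C̄)/bal(C) -/
noncomputable def ncut {n : ℕ} (w : Fin n → Fin n → ℝ) (b : Fin n → ℝ) (C : Finset (Fin n)) : ℝ :=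
  cutW w C / bal b C

/-- M̂(C) = 2 ∑_{i∈C, j∈C̄} q^m_{ij}, twice the number of violated must-links -/
noncomputable def Mhat {n : ℕ} (qm : Fin n → Fin n → ℝ) (C : Finset (Fin n)) : ℝ :=
  2 * ∑ i ∈ C, ∑ j ∈ Cᶜ, qm i j

/-- N̂(C) = ∑_{i,j∈C} q^c_{ij} + ∑_{i,j∈C̄} q^c_{ij}, twice the number of violated cannot-links -/
noncomputable def Nhat {n : ℕ} (qc : Fin n → Fin n → ℝ) (C : Finset (Fin n)) : ℝ :=
  (∑ i ∈ C, ∑ j ∈ C, qc i j) + ∑ i ∈ Cᶜ, ∑ j ∈ Cᶜ, qc i j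

/-- F̂_γ(C) = (cut(C,C̄) + γ(M̂(C)+N̂(C))) / bal(C) -/
noncomputable def Fhat {n : ℕ} (w : Fin n → Fin n → ℝ) (b : Fin n → ℝ)
    (qm qc : Fin n → Fin n → ℝ) (γ : ℝ) (C : Finset (Fin n)) : ℝ :=
  (cutW w C + γ * (Mhat qm C + Nhat qc C)) / bal b C

/-!
Comparing the minimizer `D` with the consistent partition `C` gives
`cut(D) + γ (M̂ + N̂)(D) ≤ λ bal(D) ≤ λ gvol(V) / 2 ≤ 2 (l + 1) γ`, strictly since `cut(D) > 0`,
so `(M̂ + N̂)(D) < 2 (l + 1)`. As `q^m`, `q^c` are `0/1`-valued and `q^c` is symmetric with zero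
diagonal (forced by the consistency of `C`), `(M̂ + N̂)(D)` is twice a natural number, hence `≤ 2 l`.
-/

section Sums

lemma sum_eq_card_filter_of_zero_or_one {ι R : Type*} [AddCommMonoidWithOne R] [DecidableEq R]
    (s : Finset ι) {f : ι → R} (hf : ∀ x, f x = 0 ∨ f x = 1) :
    ∑ x ∈ s, f x = #{x ∈ s | f x = 1} := by
  rw [← sum_boole]
  refine sum_congr rfl fun x _ => ?_
  rcases hf x with h | h <;> simp [h]

lemma exists_nat_sum_sum_eq_of_zero_or_one {α β R : Type*} [AddCommMonoidWithOne R]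
    (S : Finset α) (T : α → Finset β) {f : α → β → R} (hf : ∀ i j, f i j = 0 ∨ f i j = 1) :
    ∃ k : ℕ, ∑ i ∈ S, ∑ j ∈ T i, f i j = k := by
  classical
  refine ⟨∑ i ∈ S, #{j ∈ T i | f i j = 1}, ?_⟩
  push_cast
  exact sum_congr rfl fun i _ => sum_eq_card_filter_of_zero_or_one _ (hf i)

lemma sum_sum_eq_two_mul_sum_sum_lt {α R : Type*} [LinearOrder α] [NonAssocSemiring R]
    (S : Finset α) {f : α → α → R} (hsymm : ∀ i j, f i j = f j i) (hdiag : ∀ i, f i i = 0) :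
    ∑ i ∈ S, ∑ j ∈ S, f i j = 2 * ∑ i ∈ S, ∑ j ∈ S with i < j, f i j := by
  have hsplit : ∀ i j, f i j = (if i < j then f i j else 0) + (if j < i then f j i else 0) := by
    intro i j
    rcases lt_trichotomy i j with h | rfl | h
    · simp [h, h.not_gt]
    · simp [hdiag]
    · simp [h, h.not_gt, hsymm i j]
  calc ∑ i ∈ S, ∑ j ∈ S, f i j
      = ∑ i ∈ S, ∑ j ∈ S, (if i < j then f i j else 0)
          + ∑ i ∈ S, ∑ j ∈ S, (if j < i then f j i else 0) := by
        rw [← sum_add_distrib]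
        refine sum_congr rfl fun i _ => ?_
        rw [← sum_add_distrib]
        exact sum_congr rfl fun j _ => hsplit i j
    _ = 2 * ∑ i ∈ S, ∑ j ∈ S with i < j, f i j := by
        rw [sum_comm (s := S) (t := S) (f := fun i j => if j < i then f j i else 0), ← two_mul]
        simp only [sum_filter]

end Sums

section Partition

variable {n : ℕ}

lemma gvol_add_gvol_compl (b : Fin n → ℝ) (S : Finset (Fin n)) :
    gvol b S + gvol b Sᶜ = gvol b univ :=
  sum_add_sum_compl S b

lemma gvol_pos {b : Fin n → ℝ} (hb : ∀ i, 0 < b i) {S : Finset (Fin n)} (hS : S ≠ ∅) :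
    0 < gvol b S :=
  sum_pos (fun i _ => hb i) (nonempty_iff_ne_empty.mpr hS)

lemma gvol_univ_pos {b : Fin n → ℝ} (hb : ∀ i, 0 < b i) {S : Finset (Fin n)} (hS : S ≠ ∅) :
    0 < gvol b univ :=
  gvol_pos hb ((nonempty_iff_ne_empty.mpr hS).mono (subset_univ S)).ne_empty

lemma bal_pos {b : Fin n → ℝ} (hb : ∀ i, 0 < b i) {S : Finset (Fin n)} (hS₁ : S ≠ ∅)
    (hS₂ : S ≠ univ) : 0 < bal b S := by
  have hSc : Sᶜ ≠ ∅ := by rwa [Ne, compl_eq_empty_iff]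
  have := gvol_pos hb hS₁
  have := gvol_pos hb hSc
  have := gvol_univ_pos hb hS₁
  unfold bal
  positivity

lemma bal_le_half_gvol_univ {b : Fin n → ℝ} (hU : 0 < gvol b univ) (S : Finset (Fin n)) :
    bal b S ≤ gvol b univ / 2 := by
  rw [bal, div_le_div_iff₀ hU two_pos, ← gvol_add_gvol_compl b S]
  nlinarith [sq_nonneg (gvol b S - gvol b Sᶜ)]

lemma Fhat_eq_ncut (w : Fin n → Fin n → ℝ) (b : Fin n → ℝ) {qm qc : Fin n → Fin n → ℝ}
    (γ : ℝ) {C : Finset (Fin n)} (hM : Mhat qm C = 0) (hN : Nhat qc C = 0) :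
    Fhat w b qm qc γ C = ncut w b C := by
  simp [Fhat, ncut, hM, hN]

/-- Every vertex lies in `C` or in `Cᶜ`, so a partition without violated cannot-links forces
`q^c` to vanish on the diagonal. -/
lemma diag_eq_zero_of_Nhat_eq_zero {qc : Fin n → Fin n → ℝ} (hqc : ∀ i j, 0 ≤ qc i j)
    {C : Finset (Fin n)} (hN : Nhat qc C = 0) (i : Fin n) : qc i i = 0 := by
  have hnonneg : ∀ S : Finset (Fin n), 0 ≤ ∑ i ∈ S, ∑ j ∈ S, qc i j :=
    fun S => sum_nonneg fun i _ => sum_nonneg fun j _ => hqc i j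
  have hzero : ∀ S : Finset (Fin n), ∑ i ∈ S, ∑ j ∈ S, qc i j = 0 → i ∈ S → qc i i = 0 := by
    intro S hS hi
    rw [sum_eq_zero_iff_of_nonneg fun i _ => sum_nonneg fun j _ => hqc i j] at hS
    exact (sum_eq_zero_iff_of_nonneg fun j _ => hqc i j).mp (hS i hi) i hi
  rw [Nhat] at hN
  by_cases hi : i ∈ C
  · exact hzero C (by linarith [hnonneg C, hnonneg Cᶜ]) hi
  · exact hzero Cᶜ (by linarith [hnonneg C, hnonneg Cᶜ]) (mem_compl.mpr hi)

lemma exists_nat_Mhat_add_Nhat_eq_two_mul {qm qc : Fin n → Fin n → ℝ}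
    (hqm01 : ∀ i j, qm i j = 0 ∨ qm i j = 1) (hqc01 : ∀ i j, qc i j = 0 ∨ qc i j = 1)
    (hqc_symm : ∀ i j, qc i j = qc j i) (hdiag : ∀ i, qc i i = 0) (D : Finset (Fin n)) :
    ∃ k : ℕ, Mhat qm D + Nhat qc D = 2 * k := by
  obtain ⟨a, ha⟩ := exists_nat_sum_sum_eq_of_zero_or_one D (fun _ => Dᶜ) hqm01
  obtain ⟨c, hc⟩ := exists_nat_sum_sum_eq_of_zero_or_one D (fun i => {j ∈ D | i < j}) hqc01
  obtain ⟨c', hc'⟩ :=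
    exists_nat_sum_sum_eq_of_zero_or_one Dᶜ (fun i => {j ∈ Dᶜ | i < j}) hqc01
  refine ⟨a + c + c', ?_⟩
  rw [Mhat, Nhat, sum_sum_eq_two_mul_sum_sum_lt D hqc_symm hdiag,
    sum_sum_eq_two_mul_sum_sum_lt Dᶜ hqc_symm hdiag, ha, hc, hc']
  push_cast
  ring

lemma mul_Mhat_add_Nhat_lt_of_Fhat_le {w : Fin n → Fin n → ℝ} {b : Fin n → ℝ}
    {qm qc : Fin n → Fin n → ℝ} {γ lam : ℝ} (hb : ∀ i, 0 < b i) (hlam : 0 ≤ lam)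
    {D : Finset (Fin n)} (hD₁ : D ≠ ∅) (hD₂ : D ≠ univ) (hcut : 0 < cutW w D)
    (hle : Fhat w b qm qc γ D ≤ lam) :
    γ * (Mhat qm D + Nhat qc D) < lam * gvol b univ / 2 := by
  have hbal := bal_pos hb hD₁ hD₂
  rw [Fhat, div_le_iff₀ hbal] at hle
  have := mul_le_mul_of_nonneg_left (bal_le_half_gvol_univ (gvol_univ_pos hb hD₁) D) hlam
  linarith

end Partition

theorem stmt_0_general {n : ℕ} (w : Fin n → Fin n → ℝ) (b : Fin n → ℝ)
    (qm qc : Fin n → Fin n → ℝ)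
    (hb : ∀ i, 0 < b i)
    (hqm01 : ∀ i j, qm i j = 0 ∨ qm i j = 1)
    (hqc01 : ∀ i j, qc i j = 0 ∨ qc i j = 1) (hqc_symm : ∀ i j, qc i j = qc j i)
    (hconn : ∀ C : Finset (Fin n), C ≠ ∅ → C ≠ Finset.univ → 0 < cutW w C)
    (C : Finset (Fin n)) (hC₁ : C ≠ ∅) (hC₂ : C ≠ Finset.univ)
    (hcons : Mhat qm C = 0 ∧ Nhat qc C = 0)
    (l : ℕ) (γ : ℝ)
    (hγ : gvol b Finset.univ * ncut w b C / (4 * (l + 1)) ≤ γ)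
    (D : Finset (Fin n)) (hD₁ : D ≠ ∅) (hD₂ : D ≠ Finset.univ)
    (hDmin : ∀ D' : Finset (Fin n), D' ≠ ∅ → D' ≠ Finset.univ →
      Fhat w b qm qc γ D ≤ Fhat w b qm qc γ D') :
    Mhat qm D + Nhat qc D ≤ 2 * l := by
  have hdiag : ∀ i, qc i i = 0 := diag_eq_zero_of_Nhat_eq_zero
    (fun i j => by rcases hqc01 i j with h | h <;> simp [h]) hcons.2
  obtain ⟨k, hk⟩ := exists_nat_Mhat_add_Nhat_eq_two_mul hqm01 hqc01 hqc_symm hdiag D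
  have hlam : 0 < ncut w b C := div_pos (hconn C hC₁ hC₂) (bal_pos hb hC₁ hC₂)
  have hU := gvol_univ_pos hb hC₁
  have hγ' : ncut w b C * gvol b univ / 2 ≤ γ * (2 * (l + 1)) := by
    rw [div_le_iff₀ (by positivity)] at hγ
    linarith
  have hγ_pos : 0 < γ := lt_of_lt_of_le (by positivity) hγ
  have hlt := mul_Mhat_add_Nhat_lt_of_Fhat_le hb hlam.le hD₁ hD₂ (hconn D hD₁ hD₂)
    (Fhat_eq_ncut w b γ hcons.1 hcons.2 ▸ hDmin C hC₁ hC₂)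
  rw [hk] at hlt ⊢
  have hk_lt : (k : ℝ) < l + 1 := by nlinarith
  have hk_le : (k : ℝ) ≤ l := by exact_mod_cast Nat.lt_succ_iff.mp (by exact_mod_cast hk_lt)
  linarith

/-- Lemma 1: if γ ≥ gvol(V)·λ/(4(l+1)) for λ = NCut of a consistent partition,
then any minimizer of F̂_γ (over nontrivial subsets) violates no more than l constraints,
i.e. M̂(D)+N̂(D) ≤ 2l. -/
theorem stmt_0 {n : ℕ} (w : Fin n → Fin n → ℝ) (b : Fin n → ℝ)
    (qm qc : Fin n → Fin n → ℝ)
    (hw_symm : ∀ i j, w i j = w j i) (hw_nonneg : ∀ i j, 0 ≤ w i j)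
    (hb : ∀ i, 0 < b i)
    (hqm01 : ∀ i j, qm i j = 0 ∨ qm i j = 1) (hqm_symm : ∀ i j, qm i j = qm j i)
    (hqc01 : ∀ i j, qc i j = 0 ∨ qc i j = 1) (hqc_symm : ∀ i j, qc i j = qc j i)
    (hconn : ∀ C : Finset (Fin n), C ≠ ∅ → C ≠ Finset.univ → 0 < cutW w C)
    (C : Finset (Fin n)) (hC₁ : C ≠ ∅) (hC₂ : C ≠ Finset.univ)
    (hcons : Mhat qm C = 0 ∧ Nhat qc C = 0)
    (l : ℕ) (γ : ℝ)
    (hγ : gvol b Finset.univ * ncut w b C / (4 * (l + 1)) ≤ γ)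
    (D : Finset (Fin n)) (hD₁ : D ≠ ∅) (hD₂ : D ≠ Finset.univ)
    (hDmin : ∀ D' : Finset (Fin n), D' ≠ ∅ → D' ≠ Finset.univ →
      Fhat w b qm qc γ D ≤ Fhat w b qm qc γ D') :
    Mhat qm D + Nhat qc D ≤ 2 * l :=
  stmt_0_general w b qm qc hb hqm01 hqc01 hqc_symm hconn C hC₁ hC₂ hcons l γ hγ D hD₁ hD₂ hDmin
end

section
/- (Coarea-type formula for the numerator) For any f ∈ ℝ^V, the numerator R_γ(f) = ∑_{i,j} w_{ij}|f_i−f_j| + γM(f) + γN(f) satisfies R_γ(f) = ∫_{−∞}^{∞} R̂_γ(C^t_f) dt, where R̂_γ(C) = cut(C,C̄) + γM̂(C) + γN̂(C) for nontrivial C and R̂_γ(∅)=R̂_γ(V)=0, and C^t_f = {i : f_i > t}. -/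
open Finset

/-- M(f) = ∑_{i,j} q^m_{ij} |f_i - f_j| -/
noncomputable def Mfun {n : ℕ} (qm : Fin n → Fin n → ℝ) (f : Fin n → ℝ) : ℝ :=
  ∑ i, ∑ j, qm i j * |f i - f j|

/-- N(f) = vol(Q^c)(max f - min f) - ∑_{i,j} q^c_{ij} |f_i - f_j| -/
noncomputable def Nfun {n : ℕ} (qc : Fin n → Fin n → ℝ) (f : Fin n → ℝ) : ℝ :=
  (∑ i, ∑ j, qc i j) * ((⨆ i, f i) - (⨅ i, f i)) - ∑ i, ∑ j, qc i j * |f i - f j|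

/-- S(f) = ‖B(f - (⟨f,b⟩/gvol(V)) 1)‖₁ with B = diag(b) -/
noncomputable def Sfun {n : ℕ} (b : Fin n → ℝ) (f : Fin n → ℝ) : ℝ :=
  ∑ i, |b i * (f i - (∑ j, f j * b j) / gvol b Finset.univ)|

/-- F_γ(f), the continuous relaxation of F̂_γ -/
noncomputable def Fgam {n : ℕ} (w : Fin n → Fin n → ℝ) (b : Fin n → ℝ)
    (qm qc : Fin n → Fin n → ℝ) (γ : ℝ) (f : Fin n → ℝ) : ℝ :=
  ((∑ i, ∑ j, w i j * |f i - f j|) + γ * Mfun qm f + γ * Nfun qc f) / Sfun b f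

/-- the superlevel set C^t_f = {i : f_i > t} -/
noncomputable def Ctf {n : ℕ} (f : Fin n → ℝ) (t : ℝ) : Finset (Fin n) :=
  Finset.univ.filter (fun i => t < f i)

open MeasureTheory

/-- R̂_γ with the convention R̂_γ(∅) = R̂_γ(V) = 0. -/
noncomputable def RhatE {n : ℕ} (w qm qc : Fin n → Fin n → ℝ) (γ : ℝ)
    (C : Finset (Fin n)) : ℝ :=
  if C = ∅ ∨ C = Finset.univ then 0 else cutW w C + γ * (Mhat qm C + Nhat qc C)


open MeasureTheory in
lemma integ_ind_aux (a b c : ℝ) :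
    ∫ t : ℝ, (Set.Ico a b).indicator (fun _ => c) t = max (b - a) 0 * c := by
  rw [MeasureTheory.integral_indicator measurableSet_Ico, MeasureTheory.setIntegral_const,
    measureReal_def, Real.volume_Ico, smul_eq_mul]
  rcases le_total a b with h | h
  · rw [ENNReal.toReal_ofReal (by linarith), max_eq_left (by linarith)]
  · rw [ENNReal.ofReal_eq_zero.mpr (by linarith), max_eq_right (by linarith)]
    simp

open MeasureTheory in
lemma integ_ind_int (a b c : ℝ) :
    Integrable (fun t : ℝ => (Set.Ico a b).indicator (fun _ => c) t) := by
  rw [integrable_indicator_iff measurableSet_Ico]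
  exact integrableOn_const measure_Ico_lt_top.ne

lemma symm_abs_sum {n : ℕ} (c : Fin n → Fin n → ℝ) (hc : ∀ i j, c i j = c j i)
    (f : Fin n → ℝ) :
    ∑ i, ∑ j, c i j * |f i - f j| = ∑ i, ∑ j, 2 * c i j * max (f i - f j) 0 := by
  have h1 : ∑ i, ∑ j, c i j * max (f i - f j) 0
      = ∑ i, ∑ j, c i j * max (f j - f i) 0 := by
    rw [Finset.sum_comm]
    refine Finset.sum_congr rfl fun i _ => Finset.sum_congr rfl fun j _ => ?_
    rw [hc i j]
  calc ∑ i, ∑ j, c i j * |f i - f j|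
      = ∑ i, ∑ j, (c i j * max (f i - f j) 0 + c i j * max (f j - f i) 0) := by
        refine Finset.sum_congr rfl fun i _ => Finset.sum_congr rfl fun j _ => ?_
        rw [← mul_add]
        congr 1
        rw [show f j - f i = -(f i - f j) by ring, max_zero_add_max_neg_zero_eq_abs_self]
    _ = ∑ i, ∑ j, c i j * max (f i - f j) 0 + ∑ i, ∑ j, c i j * max (f j - f i) 0 := by
        rw [← Finset.sum_add_distrib]
        exact Finset.sum_congr rfl fun i _ => Finset.sum_add_distrib
    _ = ∑ i, ∑ j, 2 * c i j * max (f i - f j) 0 := by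
        rw [← h1, ← Finset.sum_add_distrib]
        refine Finset.sum_congr rfl fun i _ => ?_
        rw [← Finset.sum_add_distrib]
        exact Finset.sum_congr rfl fun j _ => by ring

/-- Coarea-type formula: R_γ(f) = ∫_{-∞}^{∞} R̂_γ(C^t_f) dt. -/
theorem stmt_6 {n : ℕ} (hn : 0 < n) (w : Fin n → Fin n → ℝ) (b : Fin n → ℝ)
    (qm qc : Fin n → Fin n → ℝ) (γ : ℝ) (hγ : 0 ≤ γ)
    (hw_symm : ∀ i j, w i j = w j i) (hw_nonneg : ∀ i j, 0 ≤ w i j)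
    (hb : ∀ i, 0 < b i)
    (hqm01 : ∀ i j, qm i j = 0 ∨ qm i j = 1) (hqm_symm : ∀ i j, qm i j = qm j i)
    (hqc01 : ∀ i j, qc i j = 0 ∨ qc i j = 1) (hqc_symm : ∀ i j, qc i j = qc j i)
    (hconn : ∀ C : Finset (Fin n), C ≠ ∅ → C ≠ Finset.univ → 0 < cutW w C)
    (f : Fin n → ℝ) :
    (∑ i, ∑ j, w i j * |f i - f j|) + γ * Mfun qm f + γ * Nfun qc f
      = ∫ t : ℝ, RhatE w qm qc γ (Ctf f t) := by
  
  haveI : Nonempty (Fin n) := ⟨⟨0, hn⟩⟩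
  set M : ℝ := Finset.univ.sup' Finset.univ_nonempty f with hM_def
  set m : ℝ := Finset.univ.inf' Finset.univ_nonempty f with hm_def
  set T : ℝ := ∑ i, ∑ j, qc i j with hT_def
  set a : Fin n → Fin n → ℝ := fun i j => 2 * (w i j + γ * qm i j - γ * qc i j) with ha_def
  have hmM : m ≤ M := le_trans (Finset.inf'_le f (Finset.mem_univ ⟨0, hn⟩))
    (Finset.le_sup' f (Finset.mem_univ ⟨0, hn⟩))
  have filter_sum : ∀ (t : ℝ) (g : Fin n → Fin n → ℝ),
      ∑ i, ∑ j, (Set.Ico (f j) (f i)).indicator (fun _ => g i j) t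
        = ∑ i ∈ Ctf f t, ∑ j ∈ (Ctf f t)ᶜ, g i j := by
    intro t g
    rw [Ctf, Finset.compl_filter, Finset.sum_filter]
    refine Finset.sum_congr rfl fun i _ => ?_
    rw [Finset.sum_filter]
    by_cases hi : t < f i
    · rw [if_pos hi]
      refine Finset.sum_congr rfl fun j _ => ?_
      by_cases hj : t < f j
      · simp [Set.indicator_apply, Set.mem_Ico, hj, not_le.2 hj]
      · simp [Set.indicator_apply, Set.mem_Ico, hj, hi, not_lt.1 hj]
    · rw [if_neg hi]
      exact Finset.sum_eq_zero fun j _ => by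
        simp [Set.indicator_apply, Set.mem_Ico, hi]
  have hNhat : ∀ C : Finset (Fin n), Nhat qc C = T - 2 * ∑ i ∈ C, ∑ j ∈ Cᶜ, qc i j := by
    intro C
    have hswap : ∑ i ∈ Cᶜ, ∑ j ∈ C, qc i j = ∑ i ∈ C, ∑ j ∈ Cᶜ, qc i j := by
      rw [Finset.sum_comm]
      exact Finset.sum_congr rfl fun i _ => Finset.sum_congr rfl fun j _ => hqc_symm _ _
    have hT2 : T = ((∑ i ∈ C, ∑ j ∈ C, qc i j) + (∑ i ∈ C, ∑ j ∈ Cᶜ, qc i j))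
        + ((∑ i ∈ Cᶜ, ∑ j ∈ C, qc i j) + ∑ i ∈ Cᶜ, ∑ j ∈ Cᶜ, qc i j) := by
      rw [hT_def, ← Finset.sum_add_sum_compl C (f := fun i => ∑ j, qc i j)]
      congr 1 <;>
        (rw [← Finset.sum_add_distrib];
          exact Finset.sum_congr rfl fun i _ =>
            (Finset.sum_add_sum_compl C (qc i)).symm)
    rw [Nhat, hswap] at *
    linarith
  have hCe : ∀ t : ℝ, Ctf f t = ∅ ↔ M ≤ t := by
    intro t
    rw [Ctf, Finset.filter_eq_empty_iff]
    constructor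
    · intro h
      exact Finset.sup'_le _ _ fun i hi => not_lt.1 (h hi)
    · intro h i hi
      exact not_lt.2 (le_trans (Finset.le_sup' f hi) h)
  have hCu : ∀ t : ℝ, Ctf f t = Finset.univ ↔ t < m := by
    intro t
    rw [Ctf, Finset.filter_eq_self]
    constructor
    · intro h
      exact (Finset.lt_inf'_iff _).2 fun i hi => h i hi
    · intro h i hi
      exact lt_of_lt_of_le h (Finset.inf'_le f hi)
  have key : ∀ t : ℝ, RhatE w qm qc γ (Ctf f t)
      = (∑ i, ∑ j, (Set.Ico (f j) (f i)).indicator (fun _ => a i j) t)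
        + (Set.Ico m M).indicator (fun _ => γ * T) t := by
    intro t
    rw [filter_sum t a]
    have hind : (Set.Ico m M).indicator (fun _ => γ * T) t
        = if Ctf f t = ∅ ∨ Ctf f t = Finset.univ then 0 else γ * T := by
      simp only [Set.indicator_apply, Set.mem_Ico]
      by_cases h : m ≤ t ∧ t < M
      · rw [if_pos h, if_neg]
        rw [not_or]
        exact ⟨fun he => absurd ((hCe t).1 he) (not_le.2 h.2),
          fun hu => absurd ((hCu t).1 hu) (not_lt.2 h.1)⟩
      · rw [if_neg h, if_pos]
        rcases not_and_or.1 h with h1 | h2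
        · exact Or.inr ((hCu t).2 (not_le.1 h1))
        · exact Or.inl ((hCe t).2 (not_lt.1 h2))
    rw [hind, RhatE]
    have ha : ∀ C : Finset (Fin n), ∑ i ∈ C, ∑ j ∈ Cᶜ, a i j
        = 2 * (∑ i ∈ C, ∑ j ∈ Cᶜ, w i j) + γ * (2 * ∑ i ∈ C, ∑ j ∈ Cᶜ, qm i j)
          - γ * (2 * ∑ i ∈ C, ∑ j ∈ Cᶜ, qc i j) := by
      intro C
      simp only [ha_def, mul_add, mul_sub, Finset.sum_add_distrib, Finset.sum_sub_distrib,
        ← Finset.mul_sum]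
      ring
    by_cases h : Ctf f t = ∅ ∨ Ctf f t = Finset.univ
    · simp only [if_pos h]
      rcases h with h | h <;> simp [h]
    · simp only [if_neg h]
      rw [cutW, Mhat, hNhat, ha]
      ring
  have heq : (fun t : ℝ => RhatE w qm qc γ (Ctf f t))
      = fun t => (∑ i, ∑ j, (Set.Ico (f j) (f i)).indicator (fun _ => a i j) t)
        + (Set.Ico m M).indicator (fun _ => γ * T) t := funext key
  rw [heq, MeasureTheory.integral_add
    (MeasureTheory.integrable_finset_sum _ fun i _ =>
      MeasureTheory.integrable_finset_sum _ fun j _ => integ_ind_int (f j) (f i) (a i j))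
    (integ_ind_int m M (γ * T)),
    MeasureTheory.integral_finset_sum _ fun i _ =>
      MeasureTheory.integrable_finset_sum _ fun j _ => integ_ind_int (f j) (f i) (a i j)]
  have hinner : ∀ i : Fin n,
      ∫ t : ℝ, ∑ j, (Set.Ico (f j) (f i)).indicator (fun _ => a i j) t
        = ∑ j, max (f i - f j) 0 * a i j := by
    intro i
    rw [MeasureTheory.integral_finset_sum _ fun j _ => integ_ind_int (f j) (f i) (a i j)]
    exact Finset.sum_congr rfl fun j _ => integ_ind_aux (f j) (f i) (a i j)
  rw [Finset.sum_congr rfl fun i _ => hinner i, integ_ind_aux m M (γ * T),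
    max_eq_left (by linarith)]
  have habs : ∑ i, ∑ j, (w i j + γ * qm i j - γ * qc i j) * |f i - f j|
      = ∑ i, ∑ j, max (f i - f j) 0 * a i j := by
    rw [symm_abs_sum (fun i j => w i j + γ * qm i j - γ * qc i j)
      (fun i j => show w i j + γ * qm i j - γ * qc i j = w j i + γ * qm j i - γ * qc j i by
        rw [hw_symm i j, hqm_symm i j, hqc_symm i j]) f]
    exact Finset.sum_congr rfl fun i _ => Finset.sum_congr rfl fun j _ => by
      simp only [ha_def]; ring
  have hsplit : ∑ i, ∑ j, (w i j + γ * qm i j - γ * qc i j) * |f i - f j|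
      = (∑ i, ∑ j, w i j * |f i - f j|) + γ * (∑ i, ∑ j, qm i j * |f i - f j|)
        - γ * (∑ i, ∑ j, qc i j * |f i - f j|) := by
    simp only [sub_mul, add_mul, mul_assoc, Finset.sum_add_distrib, Finset.sum_sub_distrib,
      ← Finset.mul_sum]
  have hsup : (⨆ i, f i) = M := (Finset.sup'_univ_eq_ciSup f).symm
  have hinf : (⨅ i, f i) = m := (Finset.inf'_univ_eq_ciInf f).symm
  rw [Mfun, Nfun, hsup, hinf, ← habs, hsplit]
  ring
end
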